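/- arXiv:1407.2275 — 2 statements merged into one kernel-verified Lean document; each statement's English description precedes it below -/
import Mathlib

section
/- Let K be a finite simplicial complex and let U = {U_1, U_2} be a cover of K by two subcomplexes that minimizes the blowup factor |K^U|/|K| subject to the balance constraint max(|U_1|,|U_2|) ≤ α|K| for a fixed α ∈ (1/2, 1). Then every maximal simplex of K lies in exactly one of U_1, U_2; that is, {U_1, U_2} restricted to the maximal cells of K is a partition of the maximal cells. -/
/-
A maximal simplex lying in both `U₁` and `U₂` can be removed from `U₁`: no face of `U₁` has it
as a proper face, so `U₁` stays a subcomplex, `U₂` still covers it, the balance constraint only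
gets easier, and `|U₁ ∩ U₂|` drops by one, contradicting optimality.
-/

open Finset

/-- `K` is an abstract simplicial complex. -/
def IsComplex {V : Type*} [DecidableEq V] (K : Finset (Finset V)) : Prop :=
  ∀ σ ∈ K, σ.Nonempty ∧ ∀ τ ⊆ σ, τ.Nonempty → τ ∈ K

/-- For a two-set cover, `|K^U| = |K| + 2|U₁ ∩ U₂|`; minimizing the blowup factor
`|K^U|/|K|` is the same as minimizing `|U₁ ∩ U₂|`. -/
def twoBlowupSize {V : Type*} [DecidableEq V]
    (K U₁ U₂ : Finset (Finset V)) : ℕ :=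
  K.card + 2 * (U₁ ∩ U₂).card

lemma IsComplex.erase {V : Type*} [DecidableEq V] {U : Finset (Finset V)} (hU : IsComplex U)
    {σ : Finset V} (hσ : ∀ τ ∈ U, σ ⊆ τ → σ = τ) : IsComplex (U.erase σ) := by
  intro τ hτ
  obtain ⟨hτσ, hτU⟩ := mem_erase.1 hτ
  obtain ⟨hτne, hfaces⟩ := hU τ hτU
  refine ⟨hτne, fun ρ hρτ hρne => mem_erase.2 ⟨?_, hfaces ρ hρτ hρne⟩⟩
  rintro rfl
  exact hτσ (hσ τ hτU hρτ).symm

lemma twoBlowupSize_erase_lt {V : Type*} [DecidableEq V] (K : Finset (Finset V))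
    {U₁ U₂ : Finset (Finset V)} {σ : Finset V} (h₁ : σ ∈ U₁) (h₂ : σ ∈ U₂) :
    twoBlowupSize K (U₁.erase σ) U₂ < twoBlowupSize K U₁ U₂ := by
  have := card_erase_lt_of_mem (mem_inter.2 ⟨h₁, h₂⟩)
  rw [twoBlowupSize, twoBlowupSize, erase_inter]
  omega

theorem stmt_1_general {V : Type*} [DecidableEq V] (K U₁ U₂ : Finset (Finset V)) (α : ℝ)
    (hU₁ : IsComplex U₁) (hU₂ : IsComplex U₂)
    (hcover : U₁ ∪ U₂ = K)
    (hbal : ((max U₁.card U₂.card : ℕ) : ℝ) ≤ α * K.card)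
    (hopt : ∀ W₁ W₂ : Finset (Finset V), W₁ ⊆ K → W₂ ⊆ K →
      IsComplex W₁ → IsComplex W₂ → W₁ ∪ W₂ = K →
      ((max W₁.card W₂.card : ℕ) : ℝ) ≤ α * K.card →
      twoBlowupSize K U₁ U₂ ≤ twoBlowupSize K W₁ W₂) :
    ∀ σ ∈ K, (∀ τ ∈ K, σ ⊆ τ → σ = τ) →
      (σ ∈ U₁ ∨ σ ∈ U₂) ∧ ¬(σ ∈ U₁ ∧ σ ∈ U₂) := by
  intro σ hσ hmax
  have hU₁K : U₁ ⊆ K := hcover ▸ subset_union_left (s₂ := U₂)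
  have hU₂K : U₂ ⊆ K := hcover ▸ subset_union_right (s₁ := U₁)
  refine ⟨mem_union.1 (hcover ▸ hσ), fun ⟨h₁, h₂⟩ => ?_⟩
  have hcover' : U₁.erase σ ∪ U₂ = K := by rw [erase_union_of_mem h₂, hcover]
  have hbal' : ((max (U₁.erase σ).card U₂.card : ℕ) : ℝ) ≤ α * K.card :=
    le_trans (Nat.cast_le.2 (max_le_max card_erase_le le_rfl)) hbal
  have hle := hopt _ _ ((erase_subset σ U₁).trans hU₁K) hU₂K
    (hU₁.erase fun τ hτ => hmax τ (hU₁K hτ)) hU₂ hcover' hbal'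
  exact (twoBlowupSize_erase_lt K h₁ h₂).not_ge hle

theorem stmt_1 {V : Type*} [DecidableEq V] (K U₁ U₂ : Finset (Finset V)) (α : ℝ)
    (hα : 1 / 2 < α ∧ α < 1)
    (hK : IsComplex K)
    (hU₁K : U₁ ⊆ K) (hU₂K : U₂ ⊆ K)
    (hU₁ : IsComplex U₁) (hU₂ : IsComplex U₂)
    (hcover : U₁ ∪ U₂ = K)
    (hbal : ((max U₁.card U₂.card : ℕ) : ℝ) ≤ α * K.card)
    (hopt : ∀ W₁ W₂ : Finset (Finset V), W₁ ⊆ K → W₂ ⊆ K →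
      IsComplex W₁ → IsComplex W₂ → W₁ ∪ W₂ = K →
      ((max W₁.card W₂.card : ℕ) : ℝ) ≤ α * K.card →
      twoBlowupSize K U₁ U₂ ≤ twoBlowupSize K W₁ W₂) :
    ∀ σ ∈ K, (∀ τ ∈ K, σ ⊆ τ → σ = τ) →
      (σ ∈ U₁ ∨ σ ∈ U₂) ∧ ¬(σ ∈ U₁ ∧ σ ∈ U₂) :=
  stmt_1_general K U₁ U₂ α hU₁ hU₂ hcover hbal hopt
end

section
/- Let K be a finite simplicial complex, let P = {P_0, ..., P_{p-1}} be a partition of the vertex set of K, and define the cover U = {U_0, ..., U_p} where for i < p, U_i consists of those simplices all of whose vertices lie in P_i, and U_p is the closure of the set of simplices whose vertices meet at least two parts of P. Then U is a closed cover of K, the sets U_0, ..., U_{p-1} are pairwise disjoint, and the blowup factor satisfies |K^U|/|K| < 3. -/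
open Finset

/-- The simplex `σ` meets at least two parts of the partition `P`. -/
def Crosses {V : Type*} [DecidableEq V] {p : ℕ}
    (P : Fin p → Finset V) (σ : Finset V) : Prop :=
  ∃ j k : Fin p, j ≠ k ∧ (σ ∩ P j).Nonempty ∧ (σ ∩ P k).Nonempty

instance {V : Type*} [DecidableEq V] {p : ℕ} (P : Fin p → Finset V) :
    DecidablePred (Crosses P) := fun σ => by
  unfold Crosses; infer_instance

/-- The partition-based cover `U = {U_0, …, U_p}` of `K` determined by a vertex
partition `P`: for `i < p`, `U_i` consists of the simplices all of whose
vertices lie in `P i`, and `U_p` is the closure of the set `S` of simplices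
meeting at least two parts. -/
def pcover {V : Type*} [DecidableEq V] {p : ℕ}
    (K : Finset (Finset V)) (P : Fin p → Finset V) : Fin (p + 1) → Finset (Finset V) :=
  fun i =>
    if h : (i : ℕ) < p then K.filter (fun σ => σ ⊆ P ⟨i, h⟩)
    else (K.filter (fun σ => Crosses P σ)).biUnion
      (fun σ => σ.powerset.filter (fun τ => τ.Nonempty))

/-- The number of cells of the Mayer–Vietoris blowup complex. -/
def blowupSize {V : Type*} [DecidableEq V] {n : ℕ}
    (K : Finset (Finset V)) (U : Fin n → Finset (Finset V)) : ℕ :=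
  ∑ J ∈ (Finset.univ : Finset (Fin n)).powerset.filter (fun J => J.Nonempty),
    (K.filter (fun σ => ∀ j ∈ J, σ ∈ U j)).card

/-!
Count the blowup simplex by simplex: `σ` contributes one cell for each nonempty set of cover
members containing it, i.e. `2 ^ m - 1` cells when it lies in `m` of them. Since `U_0, …, U_{p-1}`
are pairwise disjoint, `m ≤ 2` and every simplex contributes at most `3`. A maximal simplex
contributes only `1`: it lies in `U_p` exactly when it crosses the partition, and a crossing
simplex lies in no `U_i` with `i < p`.
-/

section Blowup

variable {V : Type*} [DecidableEq V]

theorem blowupSize_eq_sum {n : ℕ} (K : Finset (Finset V)) (U : Fin n → Finset (Finset V)) :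
    blowupSize K U = ∑ σ ∈ K, (2 ^ #{j | σ ∈ U j} - 1) := by
  let nonemptySubsets := (univ : Finset (Fin n)).powerset.filter (fun J => J.Nonempty)
  calc blowupSize K U
      = ∑ J ∈ nonemptySubsets, ∑ σ ∈ K, if ∀ j ∈ J, σ ∈ U j then 1 else 0 := by
        simp only [blowupSize, card_filter, nonemptySubsets]
    _ = ∑ σ ∈ K, #{J ∈ nonemptySubsets | ∀ j ∈ J, σ ∈ U j} := by
        rw [sum_comm]
        simp only [card_filter]
    _ = ∑ σ ∈ K, (2 ^ #{j | σ ∈ U j} - 1) := by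
        refine sum_congr rfl fun σ _ => ?_
        have hsets : {J ∈ nonemptySubsets | ∀ j ∈ J, σ ∈ U j} =
            (powerset {j | σ ∈ U j}).erase ∅ := by
          ext J
          simp [nonemptySubsets, subset_iff, nonempty_iff_ne_empty]
        rw [hsets, card_erase_of_mem (empty_mem_powerset _), card_powerset]

theorem blowupSize_lt_three_mul {n : ℕ} {K : Finset (Finset V)} {U : Fin n → Finset (Finset V)}
    (hle_two : ∀ σ ∈ K, #{j | σ ∈ U j} ≤ 2) (hle_one : ∃ σ ∈ K, #{j | σ ∈ U j} ≤ 1) :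
    blowupSize K U < 3 * #K := by
  rw [blowupSize_eq_sum, mul_comm, ← smul_eq_mul, ← sum_const]
  apply sum_lt_sum
  · intro σ hσ
    have := Nat.pow_le_pow_right two_pos (hle_two σ hσ)
    omega
  · obtain ⟨σ, hσ, hσ_one⟩ := hle_one
    refine ⟨σ, hσ, ?_⟩
    have := Nat.pow_le_pow_right two_pos hσ_one
    omega

end Blowup

theorem card_filter_mem_erase_last_le_one {α : Type*} [DecidableEq α] {n : ℕ}
    (U : Fin (n + 1) → Finset α)
    (hU : ∀ i j : Fin n, i ≠ j → Disjoint (U i.castSucc) (U j.castSucc)) (x : α) :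
    #(({j | x ∈ U j} : Finset (Fin (n + 1))).erase (Fin.last n)) ≤ 1 := by
  refine card_le_one.mpr fun a ha b hb => ?_
  simp only [mem_erase, mem_filter, mem_univ, true_and] at ha hb
  obtain ⟨a, rfl⟩ := Fin.exists_castSucc_eq.mpr ha.1
  obtain ⟨b, rfl⟩ := Fin.exists_castSucc_eq.mpr hb.1
  by_contra hab
  exact disjoint_left.mp (hU a b (ne_of_apply_ne _ hab)) ha.2 hb.2

theorem card_filter_mem_le_two {α : Type*} [DecidableEq α] {n : ℕ} (U : Fin (n + 1) → Finset α)
    (hU : ∀ i j : Fin n, i ≠ j → Disjoint (U i.castSucc) (U j.castSucc)) (x : α) :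
    #{j | x ∈ U j} ≤ 2 := by
  have := card_filter_mem_erase_last_le_one U hU x
  have := pred_card_le_card_erase (s := {j | x ∈ U j}) (a := Fin.last n)
  omega

section PartitionCover

variable {V : Type*} [DecidableEq V] {p : ℕ} {K : Finset (Finset V)} {P : Fin p → Finset V}

theorem not_crosses_of_subset (hPdisj : ∀ i j : Fin p, i ≠ j → Disjoint (P i) (P j))
    {σ : Finset V} {i : Fin p} (hσ : σ ⊆ P i) : ¬ Crosses P σ := by
  rintro ⟨j, k, hjk, ⟨v, hv⟩, ⟨w, hw⟩⟩
  rw [mem_inter] at hv hw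
  have h_eq (l : Fin p) (u : V) (hu : u ∈ σ) (hl : u ∈ P l) : l = i := by
    by_contra hne
    exact disjoint_left.mp (hPdisj l i hne) hl (hσ hu)
  exact hjk ((h_eq j v hv.1 hv.2).trans (h_eq k w hw.1 hw.2).symm)

theorem mem_pcover_castSucc (i : Fin p) (σ : Finset V) :
    σ ∈ pcover K P i.castSucc ↔ σ ∈ K ∧ σ ⊆ P i := by
  simp [pcover]

theorem mem_pcover_last (σ : Finset V) :
    σ ∈ pcover K P (Fin.last p) ↔ ∃ ρ ∈ K, Crosses P ρ ∧ σ ⊆ ρ ∧ σ.Nonempty := by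
  simp [pcover, and_assoc]

theorem pcover_subset (hK : IsComplex K) (i : Fin (p + 1)) : pcover K P i ⊆ K := by
  intro σ hσ
  induction i using Fin.lastCases with
  | last =>
    obtain ⟨ρ, hρ, -, hσρ, hσ_ne⟩ := (mem_pcover_last σ).mp hσ
    exact (hK ρ hρ).2 σ hσρ hσ_ne
  | cast i => exact ((mem_pcover_castSucc i σ).mp hσ).1

theorem isComplex_pcover (hK : IsComplex K) (i : Fin (p + 1)) : IsComplex (pcover K P i) := by
  intro σ hσ
  induction i using Fin.lastCases with
  | last =>
    obtain ⟨ρ, hρ, hρ_crosses, hσρ, hσ_ne⟩ := (mem_pcover_last σ).mp hσ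
    exact ⟨hσ_ne, fun τ hτσ hτ_ne =>
      (mem_pcover_last τ).mpr ⟨ρ, hρ, hρ_crosses, hτσ.trans hσρ, hτ_ne⟩⟩
  | cast i =>
    obtain ⟨hσK, hσP⟩ := (mem_pcover_castSucc i σ).mp hσ
    exact ⟨(hK σ hσK).1, fun τ hτσ hτ_ne =>
      (mem_pcover_castSucc i τ).mpr ⟨(hK σ hσK).2 τ hτσ hτ_ne, hτσ.trans hσP⟩⟩

theorem exists_mem_pcover (hK : IsComplex K) (hP : ∀ σ ∈ K, ∀ v ∈ σ, ∃ i, v ∈ P i)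
    {σ : Finset V} (hσ : σ ∈ K) : ∃ i, σ ∈ pcover K P i := by
  by_cases hσ_crosses : Crosses P σ
  · exact ⟨Fin.last p, (mem_pcover_last σ).mpr ⟨σ, hσ, hσ_crosses, subset_rfl, (hK σ hσ).1⟩⟩
  obtain ⟨v, hv⟩ := (hK σ hσ).1
  obtain ⟨i, hvi⟩ := hP σ hσ v hv
  refine ⟨i.castSucc, (mem_pcover_castSucc i σ).mpr ⟨hσ, fun w hw => ?_⟩⟩
  obtain ⟨j, hwj⟩ := hP σ hσ w hw
  by_contra hwi
  exact hσ_crosses ⟨j, i, fun hji => hwi (hji ▸ hwj), ⟨w, mem_inter.mpr ⟨hw, hwj⟩⟩, ⟨v, mem_inter.mpr ⟨hv, hvi⟩⟩⟩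

theorem disjoint_pcover_castSucc (hK : IsComplex K)
    (hPdisj : ∀ i j : Fin p, i ≠ j → Disjoint (P i) (P j)) (i j : Fin p) (hij : i ≠ j) :
    Disjoint (pcover K P i.castSucc) (pcover K P j.castSucc) := by
  refine disjoint_left.mpr fun σ hσi hσj => ?_
  obtain ⟨hσK, hσPi⟩ := (mem_pcover_castSucc i σ).mp hσi
  obtain ⟨v, hv⟩ := (hK σ hσK).1
  exact disjoint_left.mp (hPdisj i j hij) (hσPi hv) (((mem_pcover_castSucc j σ).mp hσj).2 hv)

theorem card_filter_mem_pcover_le_one_of_maximal (hK : IsComplex K)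
    (hPdisj : ∀ i j : Fin p, i ≠ j → Disjoint (P i) (P j)) {σ : Finset V}
    (hσ_max : ∀ τ ∈ K, σ ⊆ τ → τ = σ) : #{j | σ ∈ pcover K P j} ≤ 1 := by
  by_cases hσ_crosses : Crosses P σ
  · refine card_le_one.mpr fun a ha b hb => ?_
    have h_last (j : Fin (p + 1)) (hj : σ ∈ pcover K P j) : j = Fin.last p := by
      induction j using Fin.lastCases with
      | last => rfl
      | cast i =>
        exact absurd hσ_crosses (not_crosses_of_subset hPdisj ((mem_pcover_castSucc i σ).mp hj).2)
    simp only [mem_filter, mem_univ, true_and] at ha hb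
    rw [h_last a ha, h_last b hb]
  · have h_not_last : σ ∉ pcover K P (Fin.last p) := by
      rintro hσ_last
      obtain ⟨ρ, hρ, hρ_crosses, hσρ, -⟩ := (mem_pcover_last σ).mp hσ_last
      exact hσ_crosses (hσ_max ρ hρ hσρ ▸ hρ_crosses)
    have h_erase : ({j | σ ∈ pcover K P j} : Finset (Fin (p + 1))).erase (Fin.last p) =
        ({j | σ ∈ pcover K P j} : Finset (Fin (p + 1))) :=
      erase_eq_of_notMem (by simpa using h_not_last)
    rw [← h_erase]
    exact card_filter_mem_erase_last_le_one _ (disjoint_pcover_castSucc hK hPdisj) σ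

end PartitionCover

theorem stmt_2_general {V : Type*} [DecidableEq V] {p : ℕ}
    (K : Finset (Finset V)) (P : Fin p → Finset V)
    (hK : IsComplex K) (hKne : K.Nonempty)
    (hPdisj : ∀ i j : Fin p, i ≠ j → Disjoint (P i) (P j))
    (hPcover : ∀ v : V, (∃ i, v ∈ P i) ↔ ∃ σ ∈ K, v ∈ σ) :
    (∀ i, pcover K P i ⊆ K) ∧
    (∀ i, IsComplex (pcover K P i)) ∧
    (∀ σ ∈ K, ∃ i, σ ∈ pcover K P i) ∧
    (∀ i j : Fin (p + 1), i ≠ j → (i : ℕ) < p → (j : ℕ) < p →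
      pcover K P i ∩ pcover K P j = ∅) ∧
    blowupSize K (pcover K P) < 3 * K.card := by
  have hdisj := disjoint_pcover_castSucc hK hPdisj
  refine ⟨pcover_subset hK, isComplex_pcover hK,
    fun σ hσ => exists_mem_pcover hK (fun σ hσ v hv => (hPcover v).mpr ⟨σ, hσ, hv⟩) hσ,
    fun i j hij hi hj => ?_, ?_⟩
  · rw [← Fin.castSucc_castLT i hi, ← Fin.castSucc_castLT j hj] at hij ⊢
    exact disjoint_iff_inter_eq_empty.mp (hdisj _ _ (ne_of_apply_ne _ hij))
  · obtain ⟨σ, hσ, hσ_max⟩ := K.exists_max_image card hKne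
    exact blowupSize_lt_three_mul (fun τ _ => card_filter_mem_le_two _ hdisj τ)
      ⟨σ, hσ, card_filter_mem_pcover_le_one_of_maximal hK hPdisj
        fun τ hτ hστ => (eq_of_subset_of_card_le hστ (hσ_max τ hτ)).symm⟩

theorem stmt_2 {V : Type*} [DecidableEq V] {p : ℕ}
    (K : Finset (Finset V)) (P : Fin p → Finset V)
    (hK : IsComplex K) (hKne : K.Nonempty) (hp : 2 ≤ p)
    (hPdisj : ∀ i j : Fin p, i ≠ j → Disjoint (P i) (P j))
    (hPcover : ∀ v : V, (∃ i, v ∈ P i) ↔ ∃ σ ∈ K, v ∈ σ) :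
    (∀ i, pcover K P i ⊆ K) ∧
    (∀ i, IsComplex (pcover K P i)) ∧
    (∀ σ ∈ K, ∃ i, σ ∈ pcover K P i) ∧
    (∀ i j : Fin (p + 1), i ≠ j → (i : ℕ) < p → (j : ℕ) < p →
      pcover K P i ∩ pcover K P j = ∅) ∧
    blowupSize K (pcover K P) < 3 * K.card :=
  stmt_2_general K P hK hKne hPdisj hPcover
end
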